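/- Under the hypotheses s > t ≥ 1, k > (s−t)/(st), and c₁ ≤ w_m^{t/s}/ŵ_m ≤ c₂ for all m ∈ ℤ, the inclusion h^{k,s}_{ℂ,w} → l^t_{ℂ,ŵ} is a compact operator. -/

import Mathlib

open Filter Topology

noncomputable section

/-- Membership in the weighted Sobolev sequence space `h^{k,s}_{ℂ,w}`. -/
def hMem (k s : ℝ) (w : ℤ → ℝ) (p : ℤ → ℂ) : Prop :=
  Summable fun m : ℤ => w m * (1 + |(m : ℝ)| ^ s) ^ k * ‖p m‖ ^ s

/-- The norm `‖p‖_{k,s,w} = (∑_{m∈ℤ} w_m (1+|m|^s)^k |p_m|^s)^{1/s}`. -/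
noncomputable def hNorm (k s : ℝ) (w : ℤ → ℝ) (p : ℤ → ℂ) : ℝ :=
  (∑' m : ℤ, w m * (1 + |(m : ℝ)| ^ s) ^ k * ‖p m‖ ^ s) ^ (1 / s)

/-! A bounded sequence in `h^{k,s}_w` is bounded in every coordinate, so a Tychonoff (diagonal)
argument extracts a coordinatewise convergent subsequence; by Fatou its limit `p` lies in
`h^{k,s}_w`. With `α_m = w_m (1 + |m|^s)^k`, Young's inequality for the exponents `s/t` and
`s/(s-t)` gives, for every `η > 0`, `ŵ_m |z|^t ≤ η α_m |z|^s + K_η (ŵ_m^s / α_m^t)^{1/(s-t)}`,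
and the hypotheses on `k` and on `w^{t/s}/ŵ` make the last weight summable (it is
`O((1 + |m|^s)^{-kt/(s-t)})`). Hence the `l^t_ŵ`-norm of the differences with `p` is at most `η`
times a uniform bound plus a dominated-convergence term tending to zero. -/

lemma exists_strictMono_tendsto_pi_of_norm_le {ι E : Type*} [Countable ι] [NormedAddCommGroup E]
    [ProperSpace E] {F : ℕ → ι → E} (R : ι → ℝ) (hF : ∀ n m, ‖F n m‖ ≤ R m) :
    ∃ φ : ℕ → ℕ, StrictMono φ ∧ ∃ p : ι → E, ∀ m, Tendsto (fun n => F (φ n) m) atTop (𝓝 (p m)) := by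
  have hmem : ∀ n, F n ∈ Set.univ.pi fun m => Metric.closedBall (0 : E) (R m) := fun n m _ => by
    simpa using hF n m
  obtain ⟨p, -, φ, hφ, hp⟩ :=
    (isCompact_univ_pi fun m => isCompact_closedBall (0 : E) (R m)).tendsto_subseq hmem
  exact ⟨φ, hφ, p, tendsto_pi_nhds.1 hp⟩

lemma summable_and_tsum_le_of_tendsto {ι : Type*} {f : ℕ → ι → ℝ} {g : ι → ℝ} {M : ℝ}
    (hf₀ : ∀ n m, 0 ≤ f n m) (hf : ∀ n, Summable (f n)) (hfM : ∀ n, ∑' m, f n m ≤ M)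
    (hfg : ∀ m, Tendsto (f · m) atTop (𝓝 (g m))) :
    Summable g ∧ ∑' m, g m ≤ M := by
  have hg₀ : 0 ≤ g := fun m => ge_of_tendsto' (hfg m) fun n => hf₀ n m
  have hgS : ∀ S : Finset ι, ∑ m ∈ S, g m ≤ M := fun S =>
    le_of_tendsto' (tendsto_finsetSum S fun m _ => hfg m) fun n =>
      ((hf n).sum_le_tsum S fun m _ => hf₀ n m).trans (hfM n)
  exact ⟨summable_of_sum_le hg₀ hgS, Real.tsum_le_of_sum_le hg₀ hgS⟩

lemma norm_sub_rpow_le {E : Type*} [SeminormedAddCommGroup E] (x y : E) {r : ℝ} (hr : 0 ≤ r) :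
    ‖x - y‖ ^ r ≤ 2 ^ r * (‖x‖ ^ r + ‖y‖ ^ r) := by
  have hmax : ‖x - y‖ ≤ 2 * max ‖x‖ ‖y‖ := by
    linarith [norm_sub_le x y, le_max_left ‖x‖ ‖y‖, le_max_right ‖x‖ ‖y‖]
  calc ‖x - y‖ ^ r ≤ (2 * max ‖x‖ ‖y‖) ^ r := by gcongr
    _ = 2 ^ r * max ‖x‖ ‖y‖ ^ r := Real.mul_rpow zero_le_two (by positivity)
    _ ≤ 2 ^ r * (‖x‖ ^ r + ‖y‖ ^ r) := by
        gcongr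
        rcases max_cases ‖x‖ ‖y‖ with ⟨h, _⟩ | ⟨h, _⟩ <;> rw [h] <;> simp [Real.rpow_nonneg]

lemma tendsto_tsum_zero_of_le_mul_add {ι : Type*} {G A : ℕ → ι → ℝ} {D : ℝ}
    (hG₀ : ∀ n m, 0 ≤ G n m) (hG : ∀ m, Tendsto (G · m) atTop (𝓝 0))
    (hA₀ : ∀ n m, 0 ≤ A n m) (hA : ∀ n, Summable (A n)) (hAD : ∀ n, ∑' m, A n m ≤ D)
    (hGA : ∀ η > 0, ∃ E : ι → ℝ, Summable E ∧ ∀ n m, G n m ≤ η * A n m + E m) :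
    Tendsto (fun n => ∑' m, G n m) atTop (𝓝 0) := by
  have hD : 0 ≤ D := (tsum_nonneg (hA₀ 0)).trans (hAD 0)
  refine tendsto_order.2 ⟨fun a ha => .of_forall fun n => ha.trans_le (tsum_nonneg (hG₀ n)),
    fun ε hε => ?_⟩
  set η := ε / (2 * (D + 1))
  have hη : 0 < η := by positivity
  have hηD : η * D < ε / 2 := by
    rw [div_mul_eq_mul_div, div_lt_div_iff₀ (by positivity) two_pos]
    nlinarith
  obtain ⟨E, hE, hGAE⟩ := hGA η hη
  -- `min (G n m) |E m|` is dominated by `|E|` and carries all of `G n m` beyond `η * A n m`.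
  set H : ℕ → ι → ℝ := fun n m => min (G n m) |E m|
  have hH : ∀ n, Summable (H n) := fun n =>
    hE.abs.of_nonneg_of_le (fun m => le_min (hG₀ n m) (abs_nonneg _)) (fun m => min_le_right _ _)
  have hHlim : Tendsto (fun n => ∑' m, H n m) atTop (𝓝 0) := by
    have := tendsto_tsum_of_dominated_convergence hE.abs
      (fun m => by simpa using (hG m).min (tendsto_const_nhds (x := |E m|)))
      (.of_forall fun n m => by
        rw [Real.norm_of_nonneg (le_min (hG₀ n m) (abs_nonneg _))]; exact min_le_right _ _)
    simpa using this
  have hGle : ∀ n, ∑' m, G n m ≤ η * D + ∑' m, H n m := fun n => by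
    have hGH : ∀ m, G n m ≤ η * A n m + H n m := fun m => by
      rcases min_cases (G n m) |E m| with ⟨h, _⟩ | ⟨h, _⟩ <;> simp only [H, h]
      · linarith [mul_nonneg hη.le (hA₀ n m)]
      · linarith [hGAE n m, le_abs_self (E m)]
    have hsum : Summable fun m => η * A n m + H n m := ((hA n).mul_left η).add (hH n)
    calc ∑' m, G n m ≤ ∑' m, (η * A n m + H n m) :=
          (hsum.of_nonneg_of_le (hG₀ n) hGH).tsum_le_tsum hGH hsum
      _ = η * ∑' m, A n m + ∑' m, H n m := by
          rw [((hA n).mul_left η).tsum_add (hH n), tsum_mul_left]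
      _ ≤ η * D + ∑' m, H n m := by gcongr; exact hAD n
  filter_upwards [hHlim.eventually (gt_mem_nhds (half_pos hε))] with n hn
  linarith [hGle n]

lemma exists_rpow_mul_le_mul_add {θ η : ℝ} (hθ₀ : 0 < θ) (hθ₁ : θ < 1) (hη : 0 < η) :
    ∃ K, ∀ u v : ℝ, 0 ≤ u → 0 ≤ v → u ^ θ * v ≤ η * u + K * v ^ (1 - θ)⁻¹ := by
  have hpq := Real.HolderConjugate.inv_one_sub_inv hθ₀ hθ₁
  refine ⟨(η ^ (-θ)) ^ (1 - θ)⁻¹ * (1 - θ), fun u v hu hv => ?_⟩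
  have hηu : 0 ≤ η * u := by positivity
  calc u ^ θ * v = (η * u) ^ θ * (η ^ (-θ) * v) := by
        rw [Real.mul_rpow hη.le hu, Real.rpow_neg hη.le]
        field_simp
    _ ≤ ((η * u) ^ θ) ^ θ⁻¹ / θ⁻¹ + (η ^ (-θ) * v) ^ (1 - θ)⁻¹ / (1 - θ)⁻¹ :=
        Real.young_inequality_of_nonneg (by positivity) (by positivity) hpq
    _ = θ * (η * u) + (η ^ (-θ)) ^ (1 - θ)⁻¹ * (1 - θ) * v ^ (1 - θ)⁻¹ := by
        rw [← Real.rpow_mul hηu, mul_inv_cancel₀ hθ₀.ne', Real.rpow_one,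
          Real.mul_rpow (by positivity) hv]
        field_simp
    _ ≤ η * u + (η ^ (-θ)) ^ (1 - θ)⁻¹ * (1 - θ) * v ^ (1 - θ)⁻¹ := by
        gcongr ?_ + _
        exact mul_le_of_le_one_left hηu hθ₁.le

lemma exists_mul_rpow_le_mul_add {s t η : ℝ} (ht : 0 < t) (hts : t < s) (hη : 0 < η) :
    ∃ K, ∀ a b z : ℝ, 0 < a → 0 ≤ b → 0 ≤ z →
      b * z ^ t ≤ η * (a * z ^ s) + K * (b ^ s / a ^ t) ^ (1 / (s - t)) := by
  have hs : 0 < s := ht.trans hts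
  obtain ⟨K, hK⟩ := exists_rpow_mul_le_mul_add (div_pos ht hs) ((div_lt_one hs).2 hts) hη
  refine ⟨K, fun a b z ha hb hz => ?_⟩
  have hexp : (1 - t / s)⁻¹ = s / (s - t) := by field_simp
  have hsplit : b * z ^ t = (a * z ^ s) ^ (t / s) * (b * a ^ (-(t / s))) := by
    rw [Real.mul_rpow ha.le (by positivity), ← Real.rpow_mul hz, Real.rpow_neg ha.le]
    field_simp
  have hweight : (b * a ^ (-(t / s))) ^ (1 - t / s)⁻¹ = (b ^ s / a ^ t) ^ (1 / (s - t)) := by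
    rw [hexp, Real.mul_rpow hb (by positivity), Real.div_rpow (by positivity) (by positivity),
      ← Real.rpow_mul ha.le, ← Real.rpow_mul hb, ← Real.rpow_mul ha.le, mul_one_div s,
      show -(t / s) * (s / (s - t)) = -(t * (1 / (s - t))) by field_simp, Real.rpow_neg ha.le]
    exact (div_eq_mul_inv _ _).symm
  rw [hsplit, ← hweight]
  exact hK _ _ (by positivity) (by positivity)

theorem exists_strictMono_tendsto_of_summable_weight_ratio {ι E : Type*} [Countable ι]
    [NormedAddCommGroup E] [ProperSpace E] {s t M : ℝ} {α β : ι → ℝ} (ht : 0 < t) (hts : t < s)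
    (hα : ∀ m, 0 < α m) (hβ : ∀ m, 0 ≤ β m)
    (hαβ : Summable fun m => (β m ^ s / α m ^ t) ^ (1 / (s - t))) {F : ℕ → ι → E}
    (hF : ∀ n, Summable fun m => α m * ‖F n m‖ ^ s) (hFM : ∀ n, ∑' m, α m * ‖F n m‖ ^ s ≤ M) :
    ∃ φ : ℕ → ℕ, StrictMono φ ∧ ∃ p : ι → E, Summable (fun m => β m * ‖p m‖ ^ t) ∧
      Tendsto (fun n => ∑' m, β m * ‖F (φ n) m - p m‖ ^ t) atTop (𝓝 0) := by
  have hs : 0 < s := ht.trans hts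
  have hFm : ∀ n m, ‖F n m‖ ≤ (M / α m) ^ (1 / s) := fun n m => by
    have hterm : α m * ‖F n m‖ ^ s ≤ M :=
      ((hF n).le_tsum m fun j _ => by have := hα j; positivity).trans (hFM n)
    calc ‖F n m‖ = (‖F n m‖ ^ s) ^ (1 / s) := by
          rw [← Real.rpow_mul (norm_nonneg _), mul_one_div_cancel hs.ne', Real.rpow_one]
      _ ≤ (M / α m) ^ (1 / s) := by
          gcongr
          rwa [le_div_iff₀' (hα m)]
  obtain ⟨φ, hφ, p, hp⟩ := exists_strictMono_tendsto_pi_of_norm_le _ hFm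
  obtain ⟨hpS, hpM⟩ := summable_and_tsum_le_of_tendsto
    (f := fun n m => α m * ‖F (φ n) m‖ ^ s) (fun n m => by have := hα m; positivity)
    (fun n => hF (φ n)) (fun n => hFM (φ n))
    (fun m => (((hp m).norm).rpow_const (Or.inr hs.le)).const_mul (α m))
  set A : ℕ → ι → ℝ := fun n m => α m * ‖F (φ n) m - p m‖ ^ s
  have hA₀ : ∀ n m, 0 ≤ A n m := fun n m => by have := hα m; positivity
  have hAle : ∀ n m, A n m ≤ 2 ^ s * (α m * ‖F (φ n) m‖ ^ s + α m * ‖p m‖ ^ s) := fun n m =>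
    calc A n m ≤ α m * (2 ^ s * (‖F (φ n) m‖ ^ s + ‖p m‖ ^ s)) :=
          mul_le_mul_of_nonneg_left (norm_sub_rpow_le _ _ hs.le) (hα m).le
      _ = _ := by ring
  have hAsum : ∀ n, Summable fun m => 2 ^ s * (α m * ‖F (φ n) m‖ ^ s + α m * ‖p m‖ ^ s) :=
    fun n => ((hF (φ n)).add hpS).mul_left _
  have hA : ∀ n, Summable (A n) := fun n => (hAsum n).of_nonneg_of_le (hA₀ n) (hAle n)
  have hAD : ∀ n, ∑' m, A n m ≤ 2 ^ s * (M + M) := fun n =>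
    calc ∑' m, A n m ≤ ∑' m, 2 ^ s * (α m * ‖F (φ n) m‖ ^ s + α m * ‖p m‖ ^ s) :=
          (hA n).tsum_le_tsum (hAle n) (hAsum n)
      _ ≤ 2 ^ s * (M + M) := by
          rw [tsum_mul_left, (hF (φ n)).tsum_add hpS]
          exact mul_le_mul_of_nonneg_left (add_le_add (hFM (φ n)) hpM) (by positivity)
  have hyoung : ∀ η > 0, ∃ K, ∀ m (z : E),
      β m * ‖z‖ ^ t ≤ η * (α m * ‖z‖ ^ s) + K * (β m ^ s / α m ^ t) ^ (1 / (s - t)) :=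
    fun η hη => (exists_mul_rpow_le_mul_add ht hts hη).imp fun K hK m z =>
      hK _ _ _ (hα m) (hβ m) (norm_nonneg z)
  refine ⟨φ, hφ, p, ?_, ?_⟩
  · obtain ⟨K, hK⟩ := hyoung 1 one_pos
    exact ((hpS.mul_left 1).add (hαβ.mul_left K)).of_nonneg_of_le
      (fun m => by have := hβ m; positivity) fun m => hK m (p m)
  · refine tendsto_tsum_zero_of_le_mul_add (fun n m => by have := hβ m; positivity) (fun m => ?_)
      hA₀ hA hAD fun η hη => ?_
    · have h := ((((hp m).sub_const (p m)).norm).rpow_const (Or.inr ht.le)).const_mul (β m)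
      simpa [Real.zero_rpow ht.ne'] using h
    · obtain ⟨K, hK⟩ := hyoung η hη
      exact ⟨_, hαβ.mul_left K, fun n m => hK m _⟩

lemma summable_one_add_abs_rpow_rpow_neg {s γ : ℝ} (hs : 0 < s) (hsγ : 1 < s * γ) :
    Summable fun m : ℤ => (1 + |(m : ℝ)| ^ s) ^ (-γ) := by
  have hγ : 0 < γ := pos_of_mul_pos_right (one_pos.trans hsγ) hs.le
  refine .of_norm_bounded_eventually (Real.summable_abs_int_rpow hsγ) ?_
  filter_upwards [eventually_cofinite_ne 0] with m hm
  have hm' : 0 < |(m : ℝ)| := by positivity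
  rw [Real.norm_of_nonneg (by positivity), neg_mul_eq_mul_neg, Real.rpow_mul hm'.le]
  exact Real.rpow_le_rpow_of_nonpos (by positivity) (by linarith) (by linarith)

lemma summable_sobolev_weight_ratio {s t k c₁ : ℝ} {w wh : ℤ → ℝ} (ht : 0 < t) (hts : t < s)
    (hk : (s - t) / (s * t) < k) (hw : ∀ m, 0 < w m) (hwh : ∀ m, 0 < wh m) (hc₁ : 0 < c₁)
    (hbd : ∀ m, c₁ ≤ w m ^ (t / s) / wh m) :
    Summable fun m : ℤ => (wh m ^ s / (w m * (1 + |(m : ℝ)| ^ s) ^ k) ^ t) ^ (1 / (s - t)) := by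
  have hs : 0 < s := ht.trans hts
  have hst : 0 < s - t := sub_pos.2 hts
  have hsγ : 1 < s * (k * t / (s - t)) := by
    rw [div_lt_iff₀ (by positivity)] at hk
    rw [← mul_div_assoc, one_lt_div hst]
    linarith
  refine ((summable_one_add_abs_rpow_rpow_neg hs hsγ).mul_left
    ((c₁⁻¹ ^ s) ^ (1 / (s - t)))).of_nonneg_of_le (fun m => ?_) fun m => ?_
  · have := hw m; have := hwh m; positivity
  set x : ℝ := 1 + |(m : ℝ)| ^ s
  have hx : 0 < x := by positivity
  have hwhw : wh m ^ s ≤ c₁⁻¹ ^ s * w m ^ t := by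
    have hle : wh m ≤ c₁⁻¹ * w m ^ (t / s) := by
      rw [inv_mul_eq_div, le_div_iff₀' hc₁]
      exact (le_div_iff₀ (hwh m)).1 (hbd m)
    calc wh m ^ s ≤ (c₁⁻¹ * w m ^ (t / s)) ^ s := by have := hwh m; gcongr
      _ = c₁⁻¹ ^ s * w m ^ t := by
          rw [Real.mul_rpow (by positivity) (by have := hw m; positivity),
            ← Real.rpow_mul (hw m).le, div_mul_cancel₀ t hs.ne']
  have hratio : wh m ^ s / (w m * x ^ k) ^ t ≤ c₁⁻¹ ^ s * x ^ (-(k * t)) := by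
    have hwt : 0 < w m ^ t := Real.rpow_pos_of_pos (hw m) t
    rw [Real.mul_rpow (hw m).le (by positivity), ← Real.rpow_mul hx.le, Real.rpow_neg hx.le,
      div_le_iff₀ (by positivity)]
    calc wh m ^ s ≤ c₁⁻¹ ^ s * w m ^ t := hwhw
      _ = c₁⁻¹ ^ s * (x ^ (k * t))⁻¹ * (w m ^ t * x ^ (k * t)) := by
          field_simp
  calc (wh m ^ s / (w m * x ^ k) ^ t) ^ (1 / (s - t))
      ≤ (c₁⁻¹ ^ s * x ^ (-(k * t))) ^ (1 / (s - t)) := by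
        gcongr
        have := hw m; have := hwh m; positivity
    _ = (c₁⁻¹ ^ s) ^ (1 / (s - t)) * x ^ (-(k * t / (s - t))) := by
        rw [Real.mul_rpow (by positivity) (by positivity), ← Real.rpow_mul hx.le]
        ring_nf

lemma tsum_le_rpow_of_hNorm_le {k s C : ℝ} {w : ℤ → ℝ} {p : ℤ → ℂ} (hs : 0 < s)
    (hw : ∀ m, 0 ≤ w m) (hp : hNorm k s w p ≤ C) :
    ∑' m : ℤ, w m * (1 + |(m : ℝ)| ^ s) ^ k * ‖p m‖ ^ s ≤ C ^ s := by
  have h₀ : 0 ≤ ∑' m : ℤ, w m * (1 + |(m : ℝ)| ^ s) ^ k * ‖p m‖ ^ s :=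
    tsum_nonneg fun m => by have := hw m; positivity
  calc _ = hNorm k s w p ^ s := by
        rw [hNorm, ← Real.rpow_mul h₀, one_div_mul_cancel hs.ne', Real.rpow_one]
    _ ≤ C ^ s := Real.rpow_le_rpow (Real.rpow_nonneg h₀ _) hp hs.le

/-- under `s > t ≥ 1`, `k > (s-t)/(st)` and
`c₁ ≤ w_m^{t/s}/wh_m ≤ c₂`, the inclusion `h^{k,s}_{ℂ,w} → l^t_{ℂ,wh}` is a
compact operator. -/
theorem stmt_11 (s t k c₁ c₂ : ℝ) (ht : 1 ≤ t) (hts : t < s)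
    (hk : (s - t) / (s * t) < k) (w wh : ℤ → ℝ)
    (hw : ∀ m, 0 < w m) (hwh : ∀ m, 0 < wh m) (hc₁ : 0 < c₁)
    (hbd : ∀ m : ℤ, c₁ ≤ w m ^ (t / s) / wh m ∧ w m ^ (t / s) / wh m ≤ c₂) :
    ∀ F : ℕ → ℤ → ℂ, (∀ n, hMem k s w (F n)) →
      (∃ C : ℝ, ∀ n, hNorm k s w (F n) ≤ C) →
      ∃ φ : ℕ → ℕ, StrictMono φ ∧ ∃ p : ℤ → ℂ, hMem 0 t wh p ∧
        Tendsto (fun n => hNorm 0 t wh (F (φ n) - p)) atTop (𝓝 0) := by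
  rintro F hF ⟨C, hC⟩
  have ht₀ : 0 < t := one_pos.trans_le ht
  obtain ⟨φ, hφ, p, hp, hlim⟩ := exists_strictMono_tendsto_of_summable_weight_ratio ht₀ hts
    (α := fun m => w m * (1 + |(m : ℝ)| ^ s) ^ k) (fun m => by have := hw m; positivity)
    (fun m => (hwh m).le) (summable_sobolev_weight_ratio ht₀ hts hk hw hwh hc₁ fun m => (hbd m).1)
    hF fun n => tsum_le_rpow_of_hNorm_le (ht₀.trans hts) (fun m => (hw m).le) (hC n)
  refine ⟨φ, hφ, p, by simpa [hMem] using hp, ?_⟩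
  simpa [hNorm, Real.zero_rpow (inv_pos.2 ht₀).ne'] using
    hlim.rpow_const (p := 1 / t) (Or.inr (one_div_pos.2 ht₀).le)
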